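/- Recursive error propagation bound: suppose nonnegative numbers δ_h^t (for h ∈ [H+1], t ∈ [T]) satisfy δ_{H+1}^t = 0 and δ_h^t ≤ ∑_{j=1}^t α_t^j δ_{h+1}^j + r_h^t, where ∑_{j=t}^∞ α_j^t ≤ 1 + 1/H for each t, the weights α_t^j are nonnegative with ∑_{j=1}^t α_t^j = 1, r_h^t is non-increasing in t, and δ_h^{t+1} ≤ δ_h^t. Then δ_1^T ≤ 2H · (1/T) · ∑_{t=1}^T max_{h∈[H]} r_h^t. -/

import Mathlib

noncomputable def alphaRate (H t : ℕ) : ℝ := ((H : ℝ) + 1) / ((H : ℝ) + t)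

noncomputable def alphaWeight (H i t : ℕ) : ℝ :=
  alphaRate H i * ∏ j ∈ Finset.Icc (i + 1) t, (1 - alphaRate H j)


lemma alphaRate_nonneg (H k : ℕ) (hH : 1 ≤ H) : 0 ≤ alphaRate H k := by
  unfold alphaRate; positivity

lemma one_sub_alphaRate_nonneg (H k : ℕ) (hH : 1 ≤ H) (hk : 1 ≤ k) :
    0 ≤ 1 - alphaRate H k := by
  have h1 : (0:ℝ) < (H:ℝ) + k := by
    have : (1:ℝ) ≤ (H:ℝ) := by exact_mod_cast hH
    linarith
  have h2 : (H:ℝ) + 1 ≤ (H:ℝ) + k := by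
    have : (1:ℝ) ≤ (k:ℝ) := by exact_mod_cast hk
    linarith
  have := div_le_one_of_le₀ h2 h1.le
  unfold alphaRate; linarith

lemma alphaWeight_nonneg (H j t : ℕ) (hH : 1 ≤ H) (hj : 1 ≤ j) :
    0 ≤ alphaWeight H j t := by
  unfold alphaWeight
  apply mul_nonneg (alphaRate_nonneg H j hH)
  apply Finset.prod_nonneg
  intro k hk
  exact one_sub_alphaRate_nonneg H k hH (by have := (Finset.mem_Icc.mp hk).1; omega)

lemma key_identity (H j : ℕ) (hH : 1 ≤ H) (hj : 1 ≤ j) :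
    ∀ T, j ≤ T →
      ∑ t ∈ Finset.Icc j T, alphaWeight H j t
        = 1 + 1 / (H:ℝ) - ((T:ℝ) / H) * alphaWeight H j T := by
  intro T hT
  induction T, hT using Nat.le_induction with
  | base =>
      rw [Finset.Icc_self, Finset.sum_singleton]
      unfold alphaWeight alphaRate
      rw [Finset.Icc_eq_empty (by omega), Finset.prod_empty]
      have hH0 : (0:ℝ) < (H:ℝ) := by exact_mod_cast hH
      have hHj : (0:ℝ) < (H:ℝ) + j := by positivity
      field_simp
      ring
  | succ T hT ih =>
      rw [Finset.sum_Icc_succ_top (by omega), ih]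
      have hW : alphaWeight H j (T+1)
          = alphaWeight H j T * (1 - alphaRate H (T+1)) := by
        unfold alphaWeight
        rw [Finset.prod_Icc_succ_top (by omega)]
        ring
      rw [hW]
      have hH0 : (0:ℝ) < (H:ℝ) := by exact_mod_cast hH
      have hHT : (0:ℝ) < (H:ℝ) + ((T:ℕ):ℝ) + 1 := by positivity
      unfold alphaRate
      push_cast
      field_simp
      ring

lemma col_sum_le (H j T : ℕ) (hH : 1 ≤ H) (hj : 1 ≤ j) (hT : j ≤ T) :
    ∑ t ∈ Finset.Icc j T, alphaWeight H j t ≤ 1 + 1 / (H:ℝ) := by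
  rw [key_identity H j hH hj T hT]
  have h1 : 0 ≤ ((T:ℝ) / H) * alphaWeight H j T :=
    mul_nonneg (by positivity) (alphaWeight_nonneg H j T hH hj)
  linarith

lemma my_geom_le (H : ℕ) (hH : 1 ≤ H) :
    ∑ i ∈ Finset.range H, (1 + 1 / (H:ℝ)) ^ i ≤ 2 * (H:ℝ) := by
  have hH0 : (0:ℝ) < (H:ℝ) := by exact_mod_cast hH
  have hq : (1:ℝ) + 1 / H ≠ 1 := by
    have : (0:ℝ) < 1 / H := by positivity
    intro h; linarith [h]
  rw [geom_sum_eq hq]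
  have hpow : (1 + 1 / (H:ℝ)) ^ H ≤ 3 := by
    have h1 : (1:ℝ) + 1 / H ≤ Real.exp (1 / H) := by
      have := Real.add_one_le_exp (1 / (H:ℝ)); linarith
    have h2 : (1 + 1 / (H:ℝ)) ^ H ≤ Real.exp (1 / H) ^ H := by
      apply pow_le_pow_left₀ (by positivity) h1
    have h3 : Real.exp (1 / (H:ℝ)) ^ H = Real.exp ((H:ℝ) * (1 / H)) := by
      rw [← Real.exp_nat_mul]
    have h4 : (H:ℝ) * (1 / H) = 1 := by field_simp
    have h5 : Real.exp 1 < 3 := by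
      have := Real.exp_one_lt_d9; linarith
    rw [h3, h4] at h2
    linarith
  have hd : (1 + 1 / (H:ℝ)) - 1 = 1 / H := by ring
  rw [hd, div_le_iff₀ (by positivity : (0:ℝ) < 1 / H)]
  have : 2 * (H:ℝ) * (1 / H) = 2 := by field_simp
  rw [this]
  linarith

/-- recursive error propagation bound
    (Theorem `cegap<= regret`). -/
theorem recursive_error_bound (H T : ℕ) (hH : 1 ≤ H) (hT : 1 ≤ T)
    (δ : ℕ → ℕ → ℝ) (r : ℕ → ℕ → ℝ)
    (hδ0 : ∀ h t, 0 ≤ δ h t)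
    (hr0 : ∀ h t, 0 ≤ r h t)
    (hrmono : ∀ h t, r h (t + 1) ≤ r h t)
    (hδmono : ∀ h t, δ h (t + 1) ≤ δ h t)
    (hTop : ∀ t, δ (H + 1) t = 0)
    (hRec : ∀ h ∈ Finset.Icc 1 H, ∀ t ∈ Finset.Icc 1 T,
      δ h t ≤ ∑ j ∈ Finset.Icc 1 t, alphaWeight H j t * δ (h + 1) j + r h t)
    (hsum : ∀ t, 1 ≤ t → ∑ j ∈ Finset.Icc 1 t, alphaWeight H j t = 1)
    (htail : ∀ t, 1 ≤ t → ∑' k : ℕ, alphaWeight H t (t + k) ≤ 1 + 1 / (H : ℝ)) :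
    δ 1 T ≤ 2 * (H : ℝ) * ((1 : ℝ) / T) *
      ∑ t ∈ Finset.Icc 1 T,
        (Finset.Icc 1 H).sup' (Finset.nonempty_Icc.mpr hH) (fun h => r h t) := by
  have hH0 : (0:ℝ) < (H:ℝ) := by exact_mod_cast hH
  have hT0 : (0:ℝ) < (T:ℝ) := by exact_mod_cast hT
  set M := ∑ t ∈ Finset.Icc 1 T,
      (Finset.Icc 1 H).sup' (Finset.nonempty_Icc.mpr hH) (fun h => r h t) with hMdef
  have hδanti : ∀ h s t, s ≤ t → δ h t ≤ δ h s := by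
    intro h s t hst
    induction t, hst using Nat.le_induction with
    | base => exact le_refl _
    | succ t _ ih => exact le_trans (hδmono h t) ih
  have key : ∀ d h, 1 ≤ h → h + d = H + 1 →
      ∑ t ∈ Finset.Icc 1 T, δ h t
        ≤ (∑ i ∈ Finset.range d, (1 + 1/(H:ℝ))^i) * M := by
    intro d
    induction d with
    | zero =>
        intro h h1 hd
        have hh : h = H + 1 := by omega
        subst hh
        simp [hTop]
    | succ d ih =>
        intro h h1 hd
        have hhH : h ≤ H := by omega
        have hmem : h ∈ Finset.Icc 1 H := Finset.mem_Icc.mpr ⟨h1, hhH⟩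
        have step1 : ∑ t ∈ Finset.Icc 1 T, δ h t ≤
            (∑ t ∈ Finset.Icc 1 T, ∑ j ∈ Finset.Icc 1 t,
              alphaWeight H j t * δ (h+1) j) + ∑ t ∈ Finset.Icc 1 T, r h t := by
          rw [← Finset.sum_add_distrib]
          exact Finset.sum_le_sum (fun t ht => hRec h hmem t ht)
        have swap : ∑ t ∈ Finset.Icc 1 T, ∑ j ∈ Finset.Icc 1 t,
              alphaWeight H j t * δ (h+1) j
            = ∑ j ∈ Finset.Icc 1 T, ∑ t ∈ Finset.Icc j T,
              alphaWeight H j t * δ (h+1) j := by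
          have hcomm := Finset.sum_Ico_Ico_comm 1 (T+1)
            (fun j t => alphaWeight H j t * δ (h+1) j)
          simp only [Finset.Ico_add_one_right_eq_Icc] at hcomm
          exact hcomm.symm
        have step2 : ∑ j ∈ Finset.Icc 1 T, ∑ t ∈ Finset.Icc j T,
              alphaWeight H j t * δ (h+1) j
            ≤ (1 + 1/(H:ℝ)) * ∑ j ∈ Finset.Icc 1 T, δ (h+1) j := by
          rw [Finset.mul_sum]
          apply Finset.sum_le_sum
          intro j hj
          obtain ⟨hj1, hjT⟩ := Finset.mem_Icc.mp hj
          rw [← Finset.sum_mul]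
          exact mul_le_mul_of_nonneg_right (col_sum_le H j T hH hj1 hjT) (hδ0 _ _)
        have step3 : ∑ t ∈ Finset.Icc 1 T, r h t ≤ M := by
          apply Finset.sum_le_sum
          intro t _
          exact Finset.le_sup' (fun h' => r h' t) hmem
        have hq0 : (0:ℝ) ≤ 1 + 1/(H:ℝ) := by positivity
        have ih' : (1 + 1/(H:ℝ)) * ∑ j ∈ Finset.Icc 1 T, δ (h+1) j
            ≤ (1 + 1/(H:ℝ)) * ((∑ i ∈ Finset.range d, (1 + 1/(H:ℝ))^i) * M) :=
          mul_le_mul_of_nonneg_left (ih (h+1) (by omega) (by omega)) hq0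
        rw [geom_sum_succ, add_mul, one_mul, mul_assoc]
        rw [swap] at step1
        linarith
  have hM0 : 0 ≤ M := by
    apply Finset.sum_nonneg
    intro t _
    exact le_trans (hr0 1 t)
      (Finset.le_sup' (fun h' => r h' t) (Finset.mem_Icc.mpr ⟨le_refl 1, hH⟩))
  have hS1 : ∑ t ∈ Finset.Icc 1 T, δ 1 t ≤ 2 * (H:ℝ) * M := by
    calc ∑ t ∈ Finset.Icc 1 T, δ 1 t
        ≤ (∑ i ∈ Finset.range H, (1 + 1/(H:ℝ))^i) * M := key H 1 le_rfl (by omega)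
      _ ≤ 2 * (H:ℝ) * M := mul_le_mul_of_nonneg_right (my_geom_le H hH) hM0
  have hTd : (T:ℝ) * δ 1 T ≤ ∑ t ∈ Finset.Icc 1 T, δ 1 t := by
    have hle : ∑ t ∈ Finset.Icc 1 T, δ 1 T ≤ ∑ t ∈ Finset.Icc 1 T, δ 1 t :=
      Finset.sum_le_sum (fun t ht => hδanti 1 t T (Finset.mem_Icc.mp ht).2)
    have hc : ∑ t ∈ Finset.Icc 1 T, δ 1 T = (T:ℝ) * δ 1 T := by
      rw [Finset.sum_const, Nat.card_Icc, nsmul_eq_mul]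
      norm_num
    linarith [hle, hc ▸ hle]
  rw [show 2 * (H:ℝ) * ((1:ℝ)/T) * M = (2 * (H:ℝ) * M) / T by ring]
  rw [le_div_iff₀ hT0]
  nlinarith [hTd, hS1]
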